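/- Let n be a finite index type, let K : ℝ → Matrix n n ℝ be differentiable at a point d₀ with K(d₀) symmetric and invertible, and let f ∈ ℝⁿ be a fixed load vector. Then the compliance function d ↦ fᵀ · K(d)⁻¹ · f is differentiable at d₀, and its derivative equals −uᵀ · K′(d₀) · u, where u = K(d₀)⁻¹ · f is the displacement vector and K′(d₀) is the derivative of K at d₀. -/

import Mathlib

/-!
By the chain rule the compliance has derivative `fᵀ (d/dd (K d)⁻¹) f`, and the derivative of the
inverse is `-K⁻¹ K' K⁻¹`. Since `K⁻¹` is symmetric, `fᵀ K⁻¹ K' K⁻¹ f = uᵀ K' u` with `u = K⁻¹ f`.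
-/

open Matrix

theorem HasDerivAt.ringInverse {𝕜 R : Type*} [NontriviallyNormedField 𝕜] [NormedRing R]
    [HasSummableGeomSeries R] [NormedAlgebra 𝕜 R] {f : 𝕜 → R} {f' : R} {x : 𝕜}
    (hf : HasDerivAt f f' x) (hx : IsUnit (f x)) :
    HasDerivAt (fun t => Ring.inverse (f t))
      (-(Ring.inverse (f x) * f' * Ring.inverse (f x))) x := by
  obtain ⟨u, hu⟩ := hx
  have hinv := hasFDerivAt_ringInverse (𝕜 := 𝕜) u
  rw [hu] at hinv
  simpa [← hu, Function.comp_def] using hinv.comp_hasDerivAt x hf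

/- Derivatives of matrix-valued functions only see the (product) topology on matrices, so any
norm inducing it may be used in the proofs below: the `L∞` operator norm for the normed algebra
structure, the sup norm for the chain rule. -/

theorem HasDerivAt.matrix_inv {𝕜 n : Type*} [NontriviallyNormedField 𝕜] [CompleteSpace 𝕜]
    [Fintype n] [DecidableEq n] {A : 𝕜 → Matrix n n 𝕜} {A' : Matrix n n 𝕜} {x : 𝕜}
    (hA : HasDerivAt A A' x) (hx : IsUnit (A x)) :
    HasDerivAt (fun t => (A t)⁻¹) (-((A x)⁻¹ * A' * (A x)⁻¹)) x := by
  simp only [nonsing_inv_eq_ringInverse]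
  let := Matrix.linftyOpNormedRing (n := n) (α := 𝕜)
  let := Matrix.linftyOpNormedAlgebra (n := n) (R := 𝕜) (α := 𝕜)
  have : HasSummableGeomSeries (Matrix n n 𝕜) :=
    @instHasSummableGeomSeriesOfCompleteSpace _ _ (FiniteDimensional.complete 𝕜 _)
  exact hA.ringInverse hx

theorem HasDerivAt.dotProduct_matrix_mulVec {𝕜 m n : Type*} [NontriviallyNormedField 𝕜]
    [CompleteSpace 𝕜] [Fintype m] [Fintype n] {A : 𝕜 → Matrix m n 𝕜} {A' : Matrix m n 𝕜}
    {x : 𝕜} (hA : HasDerivAt A A' x) (v : m → 𝕜) (w : n → 𝕜) :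
    HasDerivAt (fun t => v ⬝ᵥ (A t *ᵥ w)) (v ⬝ᵥ (A' *ᵥ w)) x := by
  let L : Matrix m n 𝕜 →ₗ[𝕜] 𝕜 :=
    { toFun := fun M => v ⬝ᵥ (M *ᵥ w)
      map_add' := fun M N => by simp only [add_mulVec, dotProduct_add]
      map_smul' := fun c M => by simp only [smul_mulVec, dotProduct_smul, RingHom.id_apply] }
  let := Matrix.normedAddCommGroup (m := m) (n := n) (α := 𝕜)
  let := Matrix.normedSpace (m := m) (n := n) (R := 𝕜) (α := 𝕜)
  exact L.toContinuousLinearMap.hasFDerivAt.comp_hasDerivAt x hA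

theorem Matrix.IsSymm.dotProduct_mul_mul_mulVec {R n : Type*} [CommSemiring R] [Fintype n]
    {S : Matrix n n R} (hS : S.IsSymm) (M : Matrix n n R) (v : n → R) :
    v ⬝ᵥ ((S * M * S) *ᵥ v) = (S *ᵥ v) ⬝ᵥ (M *ᵥ (S *ᵥ v)) := by
  rw [← mulVec_mulVec, ← mulVec_mulVec, dotProduct_mulVec, ← mulVec_transpose, hS.eq]

attribute [local instance] Matrix.normedAddCommGroup Matrix.normedSpace

/-- Sensitivity of structural compliance: for a differentiable stiffness-matrix
family `K` with `K d₀` symmetric and invertible, the compliance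
`d ↦ fᵀ (K d)⁻¹ f` is differentiable at `d₀` with derivative `-uᵀ K′(d₀) u`,
where `u = (K d₀)⁻¹ f`. -/
theorem compliance_sensitivity {n : Type*} [Fintype n] [DecidableEq n]
    (K : ℝ → Matrix n n ℝ) (d₀ : ℝ) (f : n → ℝ)
    (hK : DifferentiableAt ℝ K d₀)
    (hsymm : (K d₀).IsSymm) (hinv : IsUnit (K d₀)) :
    DifferentiableAt ℝ (fun d => f ⬝ᵥ ((K d)⁻¹ *ᵥ f)) d₀ ∧
      deriv (fun d => f ⬝ᵥ ((K d)⁻¹ *ᵥ f)) d₀ =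
        -(((K d₀)⁻¹ *ᵥ f) ⬝ᵥ (deriv K d₀ *ᵥ ((K d₀)⁻¹ *ᵥ f))) := by
  have hC := (hK.hasDerivAt.matrix_inv hinv).dotProduct_matrix_mulVec f f
  refine ⟨hC.differentiableAt, ?_⟩
  rw [hC.deriv, neg_mulVec, dotProduct_neg]
  exact congrArg Neg.neg (hsymm.inv.dotProduct_mul_mul_mulVec _ _)
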